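/- arXiv:2605.08001 — 6 statements merged into one kernel-verified Lean document; each statement's English description precedes it below -/
import Mathlib

section
/- Let M and N be metric spaces, let z_1, …, z_n be points of M × N with n ≥ 1, and let 0 < a ≤ b < 2. Define the empirical objective F_{n,α}(m) = (1/n)·Σ_{i=1}^n d_α(m, z_i) for m ∈ M × N. Then the infimum of F_{n,α}(m) over all m ∈ M × N and α ∈ [a, b] equals the minimum of inf_{m} F_{n,a}(m) and inf_{m} F_{n,b}(m). -/
/-- The scaled product distance
`d_α((p,q),(x,y)) = √(α·d_M(p,x)² + (2−α)·d_N(q,y)²)`. -/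
noncomputable def dAlpha {M N : Type*} [MetricSpace M] [MetricSpace N]
    (α : ℝ) (m z : M × N) : ℝ :=
  Real.sqrt (α * dist m.1 z.1 ^ 2 + (2 - α) * dist m.2 z.2 ^ 2)

lemma dAlpha_concave_ineq {M N : Type*} [MetricSpace M] [MetricSpace N]
    (a b t : ℝ) (ha : 0 ≤ a) (hb : 0 ≤ b) (hab : a ≤ 2) (hbb : b ≤ 2)
    (ht0 : 0 ≤ t) (ht1 : t ≤ 1) (m z : M × N) :
    (1 - t) * dAlpha a m z + t * dAlpha b m z ≤ dAlpha ((1 - t) * a + t * b) m z := by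
  have hx : (0:ℝ) ≤ dist m.1 z.1 ^ 2 := sq_nonneg _
  have hy : (0:ℝ) ≤ dist m.2 z.2 ^ 2 := sq_nonneg _
  have h1 : (0:ℝ) ≤ a * dist m.1 z.1 ^ 2 + (2 - a) * dist m.2 z.2 ^ 2 :=
    add_nonneg (mul_nonneg ha hx) (mul_nonneg (by linarith) hy)
  have h2 : (0:ℝ) ≤ b * dist m.1 z.1 ^ 2 + (2 - b) * dist m.2 z.2 ^ 2 :=
    add_nonneg (mul_nonneg hb hx) (mul_nonneg (by linarith) hy)
  have := Real.strictConcaveOn_sqrt.concaveOn.2 h1 h2 (sub_nonneg.2 ht1) ht0 (by ring)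
  simp only [smul_eq_mul] at this
  unfold dAlpha
  calc (1 - t) * Real.sqrt (a * dist m.1 z.1 ^ 2 + (2 - a) * dist m.2 z.2 ^ 2)
        + t * Real.sqrt (b * dist m.1 z.1 ^ 2 + (2 - b) * dist m.2 z.2 ^ 2)
      ≤ Real.sqrt ((1 - t) * (a * dist m.1 z.1 ^ 2 + (2 - a) * dist m.2 z.2 ^ 2)
          + t * (b * dist m.1 z.1 ^ 2 + (2 - b) * dist m.2 z.2 ^ 2)) := this
    _ = Real.sqrt (((1 - t) * a + t * b) * dist m.1 z.1 ^ 2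
          + (2 - ((1 - t) * a + t * b)) * dist m.2 z.2 ^ 2) := by ring_nf

theorem stmt_4 {M N : Type*} [MetricSpace M] [MetricSpace N]
    (n : ℕ) (hn : 1 ≤ n) (z : Fin n → M × N)
    (a b : ℝ) (ha : 0 < a) (hab : a ≤ b) (hb : b < 2)
    (F : ℝ → M × N → ℝ)
    (hF : ∀ α m, F α m = (1 / (n : ℝ)) * ∑ i, dAlpha α m (z i)) :
    sInf {v : ℝ | ∃ m : M × N, ∃ α ∈ Set.Icc a b, v = F α m} =
      min (sInf {v : ℝ | ∃ m : M × N, v = F a m})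
          (sInf {v : ℝ | ∃ m : M × N, v = F b m}) := by
  set S := {v : ℝ | ∃ m : M × N, ∃ α ∈ Set.Icc a b, v = F α m} with hS
  set Sa := {v : ℝ | ∃ m : M × N, v = F a m} with hSa
  set Sb := {v : ℝ | ∃ m : M × N, v = F b m} with hSb
  have hm0 : M × N := z ⟨0, hn⟩
  have hFnn : ∀ α m, 0 ≤ F α m := by
    intro α m
    rw [hF]
    apply mul_nonneg (by positivity)
    exact Finset.sum_nonneg fun i _ => Real.sqrt_nonneg _
  have hbddS : BddBelow S := ⟨0, fun v ⟨m, α, _, hv⟩ => hv ▸ hFnn α m⟩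
  have hbddSa : BddBelow Sa := ⟨0, fun v ⟨m, hv⟩ => hv ▸ hFnn a m⟩
  have hbddSb : BddBelow Sb := ⟨0, fun v ⟨m, hv⟩ => hv ▸ hFnn b m⟩
  have hneS : S.Nonempty := ⟨F a hm0, hm0, a, ⟨le_refl a, hab⟩, rfl⟩
  have hneSa : Sa.Nonempty := ⟨F a hm0, hm0, rfl⟩
  have hneSb : Sb.Nonempty := ⟨F b hm0, hm0, rfl⟩
  apply le_antisymm
  · apply le_min
    · exact csInf_le_csInf hbddS hneSa fun v ⟨m, hv⟩ => ⟨m, a, ⟨le_refl a, hab⟩, hv⟩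
    · exact csInf_le_csInf hbddS hneSb fun v ⟨m, hv⟩ => ⟨m, b, ⟨hab, le_refl b⟩, hv⟩
  · apply le_csInf hneS
    rintro v ⟨m, α, ⟨hαa, hαb⟩, rfl⟩
    have key : min (F a m) (F b m) ≤ F α m := by
      rcases eq_or_lt_of_le hab with h | h
      · have : α = a := le_antisymm (h ▸ hαb) hαa
        subst this
        exact min_le_left _ _
      · set t := (α - a) / (b - a) with ht
        have hba : 0 < b - a := by linarith
        have ht0 : 0 ≤ t := div_nonneg (by linarith) hba.le
        have ht1 : t ≤ 1 := (div_le_one hba).2 (by linarith)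
        have hα : α = (1 - t) * a + t * b := by
          field_simp [ht]
          have h' : t * (b - a) = α - a := by rw [ht]; exact div_mul_cancel₀ _ hba.ne'
          linarith
        have hsum : (1 - t) * F a m + t * F b m ≤ F α m := by
          rw [hF, hF, hF, hα]
          simp only [Finset.mul_sum]
          rw [← Finset.sum_add_distrib]
          apply Finset.sum_le_sum
          intro i _
          have := dAlpha_concave_ineq a b t ha.le (by linarith) (by linarith) hb.le
            ht0 ht1 m (z i)
          have hninv : (0:ℝ) ≤ 1 / (n:ℝ) := by positivity
          calc (1 - t) * (1 / (n:ℝ) * dAlpha a m (z i)) + t * (1 / (n:ℝ) * dAlpha b m (z i))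
              = 1 / (n:ℝ) * ((1 - t) * dAlpha a m (z i) + t * dAlpha b m (z i)) := by ring
            _ ≤ 1 / (n:ℝ) * dAlpha ((1 - t) * a + t * b) m (z i) := by
                exact mul_le_mul_of_nonneg_left this hninv
        calc min (F a m) (F b m)
            = (1 - t) * min (F a m) (F b m) + t * min (F a m) (F b m) := by ring
          _ ≤ (1 - t) * F a m + t * F b m := by
              gcongr
              · exact min_le_left _ _
              · exact min_le_right _ _
          _ ≤ F α m := hsum
    calc min (sInf Sa) (sInf Sb) ≤ min (F a m) (F b m) := by
          apply min_le_min
          · exact csInf_le hbddSa ⟨m, rfl⟩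
          · exact csInf_le hbddSb ⟨m, rfl⟩
      _ ≤ F α m := key
end

section
/- Let M and N be metric spaces, let P be a Borel probability measure on M × N, and assume there exists (p₀, q₀) ∈ M × N such that z ↦ d_M(p₀, z.1) and z ↦ d_N(q₀, z.2) are integrable with respect to P. Define F_α(m) = ∫ d_α(m, z) dP(z). Then the infimum of F_α(m) over all m ∈ M × N and all α in the open interval (0, 2) equals √2 times the minimum of inf_{p ∈ M} ∫ d_M(p, z.1) dP(z) and inf_{q ∈ N} ∫ d_N(q, z.2) dP(z). -/
open MeasureTheory

/-- `√(x+y) ≤ √x + √y` for nonnegative `x, y`. -/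
lemma sqrt_add_le_aux {x y : ℝ} (hx : 0 ≤ x) (hy : 0 ≤ y) :
    Real.sqrt (x + y) ≤ Real.sqrt x + Real.sqrt y := by
  have h := Real.sqrt_le_sqrt (show x + y ≤ (Real.sqrt x + Real.sqrt y) ^ 2 by
    have hx' := Real.sq_sqrt hx
    have hy' := Real.sq_sqrt hy
    have hxy : 0 ≤ Real.sqrt x * Real.sqrt y :=
      mul_nonneg (Real.sqrt_nonneg _) (Real.sqrt_nonneg _)
    nlinarith)
  rwa [Real.sqrt_sq (add_nonneg (Real.sqrt_nonneg _) (Real.sqrt_nonneg _))] at h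

/-- Upper pointwise bound for the scaled distance. -/
lemma ub_aux {α a b : ℝ} (hα : 0 ≤ α) (hα2 : α ≤ 2) (ha : 0 ≤ a) (hb : 0 ≤ b) :
    Real.sqrt (α * a ^ 2 + (2 - α) * b ^ 2) ≤
      Real.sqrt α * a + Real.sqrt (2 - α) * b := by
  have h2 : (0:ℝ) ≤ 2 - α := by linarith
  have e1 : Real.sqrt (α * a ^ 2) = Real.sqrt α * a := by
    rw [Real.sqrt_mul hα, Real.sqrt_sq ha]
  have e2 : Real.sqrt ((2 - α) * b ^ 2) = Real.sqrt (2 - α) * b := by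
    rw [Real.sqrt_mul h2, Real.sqrt_sq hb]
  calc Real.sqrt (α * a ^ 2 + (2 - α) * b ^ 2)
      ≤ Real.sqrt (α * a ^ 2) + Real.sqrt ((2 - α) * b ^ 2) :=
        sqrt_add_le_aux (by positivity) (by positivity)
    _ = Real.sqrt α * a + Real.sqrt (2 - α) * b := by rw [e1, e2]

/-- Cauchy–Schwarz pointwise inequality. -/
lemma cs_aux {α A B a b : ℝ} (hα : 0 ≤ α) (hα2 : α ≤ 2) (hA : 0 ≤ A) (hB : 0 ≤ B)
    (ha : 0 ≤ a) (hb : 0 ≤ b) :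
    α * A * a + (2 - α) * B * b ≤
      Real.sqrt (α * A ^ 2 + (2 - α) * B ^ 2) *
        Real.sqrt (α * a ^ 2 + (2 - α) * b ^ 2) := by
  have h2 : (0:ℝ) ≤ 2 - α := by linarith
  have h1 : (0:ℝ) ≤ α * A ^ 2 + (2 - α) * B ^ 2 := by positivity
  have hL : 0 ≤ α * A * a + (2 - α) * B * b := by positivity
  have key : (α * A * a + (2 - α) * B * b) ^ 2 ≤
      (α * A ^ 2 + (2 - α) * B ^ 2) * (α * a ^ 2 + (2 - α) * b ^ 2) := by
    nlinarith [sq_nonneg (A * b - B * a), mul_nonneg hα h2, sq_nonneg (A * b + B * a)]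
  have h := Real.sqrt_le_sqrt key
  rwa [Real.sqrt_sq hL, Real.sqrt_mul h1] at h

theorem stmt_6 {M N : Type*} [MetricSpace M] [MetricSpace N]
    [MeasurableSpace M] [MeasurableSpace N] [BorelSpace M] [BorelSpace N]
    (P : Measure (M × N)) [IsProbabilityMeasure P]
    (p₀ : M) (q₀ : N)
    (hM : Integrable (fun z : M × N => dist p₀ z.1) P)
    (hN : Integrable (fun z : M × N => dist q₀ z.2) P)
    (F : ℝ → M × N → ℝ)
    (hF : ∀ α m, F α m = ∫ z, dAlpha α m z ∂P) :
    sInf {v : ℝ | ∃ m : M × N, ∃ α ∈ Set.Ioo (0 : ℝ) 2, v = F α m} =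
      Real.sqrt 2 *
        min (sInf {v : ℝ | ∃ p : M, v = ∫ z, dist p z.1 ∂P})
            (sInf {v : ℝ | ∃ q : N, v = ∫ z, dist q z.2 ∂P}) := by
  -- integrability of factor distances at every point
  have hintM : ∀ p : M, Integrable (fun z : M × N => dist p z.1) P := by
    intro p
    refine ((integrable_const (dist p p₀)).add hM).mono'
      (((Continuous.dist continuous_const continuous_id).measurable.comp
        measurable_fst).aestronglyMeasurable) ?_
    filter_upwards with z
    rw [Real.norm_of_nonneg dist_nonneg]
    exact dist_triangle p p₀ z.1
  have hintN : ∀ q : N, Integrable (fun z : M × N => dist q z.2) P := by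
    intro q
    refine ((integrable_const (dist q q₀)).add hN).mono'
      (((Continuous.dist continuous_const continuous_id).measurable.comp
        measurable_snd).aestronglyMeasurable) ?_
    filter_upwards with z
    rw [Real.norm_of_nonneg dist_nonneg]
    exact dist_triangle q q₀ z.2
  -- integrability of dAlpha
  have hintD : ∀ α : ℝ, 0 ≤ α → α ≤ 2 → ∀ m : M × N,
      Integrable (fun z => dAlpha α m z) P := by
    intro α h0 h2 m
    have m1 : Measurable fun z : M × N => dist m.1 z.1 :=
      (Continuous.dist continuous_const continuous_id).measurable.comp measurable_fst
    have m2 : Measurable fun z : M × N => dist m.2 z.2 :=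
      (Continuous.dist continuous_const continuous_id).measurable.comp measurable_snd
    refine (((hintM m.1).add (hintN m.2)).const_mul (Real.sqrt 2)).mono' ?_ ?_
    · exact (Real.continuous_sqrt.measurable.comp
        ((measurable_const.mul (m1.pow_const 2)).add
          (measurable_const.mul (m2.pow_const 2)))).aestronglyMeasurable
    · filter_upwards with z
      have hd0 : (0:ℝ) ≤ dAlpha α m z := Real.sqrt_nonneg _
      rw [Real.norm_of_nonneg hd0]
      simp only [Pi.add_apply]
      have h : dAlpha α m z ≤
          Real.sqrt α * dist m.1 z.1 + Real.sqrt (2 - α) * dist m.2 z.2 :=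
        ub_aux h0 h2 dist_nonneg dist_nonneg
      have hs1 : Real.sqrt α ≤ Real.sqrt 2 := Real.sqrt_le_sqrt h2
      have hs2 : Real.sqrt (2 - α) ≤ Real.sqrt 2 := Real.sqrt_le_sqrt (by linarith)
      have hd1 : (0:ℝ) ≤ dist m.1 z.1 := dist_nonneg
      have hd2 : (0:ℝ) ≤ dist m.2 z.2 := dist_nonneg
      calc dAlpha α m z ≤ Real.sqrt α * dist m.1 z.1 + Real.sqrt (2 - α) * dist m.2 z.2 := h
        _ ≤ Real.sqrt 2 * (dist m.1 z.1 + dist m.2 z.2) := by nlinarith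
  -- names
  set S : Set ℝ := {v : ℝ | ∃ m : M × N, ∃ α ∈ Set.Ioo (0 : ℝ) 2, v = F α m} with hS
  set SM : Set ℝ := {v : ℝ | ∃ p : M, v = ∫ z, dist p z.1 ∂P} with hSM
  set SN : Set ℝ := {v : ℝ | ∃ q : N, v = ∫ z, dist q z.2 ∂P} with hSN
  have hSMne : SM.Nonempty := ⟨_, ⟨p₀, rfl⟩⟩
  have hSNne : SN.Nonempty := ⟨_, ⟨q₀, rfl⟩⟩
  have hSne : S.Nonempty :=
    ⟨F 1 (p₀, q₀), ⟨(p₀, q₀), 1, ⟨one_pos, one_lt_two⟩, rfl⟩⟩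
  have hIM : 0 ≤ sInf SM := Real.sInf_nonneg (by
    rintro x ⟨p, rfl⟩; exact integral_nonneg fun z => dist_nonneg)
  have hIN : 0 ≤ sInf SN := Real.sInf_nonneg (by
    rintro x ⟨q, rfl⟩; exact integral_nonneg fun z => dist_nonneg)
  set IM := sInf SM
  set IN := sInf SN
  -- the key lower bound for each element of S
  have hlow : ∀ v ∈ S, Real.sqrt 2 * min IM IN ≤ v := by
    rintro v ⟨m, α, ⟨hα0, hα2⟩, rfl⟩
    rw [hF]
    set A := ∫ z, dist m.1 z.1 ∂P with hA
    set B := ∫ z, dist m.2 z.2 ∂P with hB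
    have hA0 : 0 ≤ A := integral_nonneg fun z => dist_nonneg
    have hB0 : 0 ≤ B := integral_nonneg fun z => dist_nonneg
    set c := Real.sqrt (α * A ^ 2 + (2 - α) * B ^ 2) with hc
    have hc0 : 0 ≤ c := Real.sqrt_nonneg _
    have hq : (0:ℝ) ≤ α * A ^ 2 + (2 - α) * B ^ 2 :=
      add_nonneg (mul_nonneg hα0.le (sq_nonneg _))
        (mul_nonneg (by linarith) (sq_nonneg _))
    -- step 1 : c² ≤ c * ∫ dAlpha
    have hint1 : Integrable (fun z : M × N =>
        α * A * dist m.1 z.1 + (2 - α) * B * dist m.2 z.2) P :=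
      ((hintM m.1).const_mul _).add ((hintN m.2).const_mul _)
    have hmono : ∫ z, (α * A * dist m.1 z.1 + (2 - α) * B * dist m.2 z.2) ∂P ≤
        ∫ z, c * dAlpha α m z ∂P := by
      refine integral_mono hint1 ((hintD α hα0.le hα2.le m).const_mul c) ?_
      intro z
      exact cs_aux hα0.le hα2.le hA0 hB0 dist_nonneg dist_nonneg
    have heq1 : ∫ z, (α * A * dist m.1 z.1 + (2 - α) * B * dist m.2 z.2) ∂P =
        α * A ^ 2 + (2 - α) * B ^ 2 := by
      rw [integral_add ((hintM m.1).const_mul _) ((hintN m.2).const_mul _),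
        integral_const_mul, integral_const_mul, ← hA, ← hB]
      ring
    have heq2 : ∫ z, c * dAlpha α m z ∂P = c * ∫ z, dAlpha α m z ∂P :=
      integral_const_mul c _
    have hstep1 : c * c ≤ c * ∫ z, dAlpha α m z ∂P := by
      have hcc : c * c = α * A ^ 2 + (2 - α) * B ^ 2 := Real.mul_self_sqrt hq
      rw [hcc]
      calc α * A ^ 2 + (2 - α) * B ^ 2
          = ∫ z, (α * A * dist m.1 z.1 + (2 - α) * B * dist m.2 z.2) ∂P := heq1.symm
        _ ≤ ∫ z, c * dAlpha α m z ∂P := hmono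
        _ = c * ∫ z, dAlpha α m z ∂P := heq2
    -- step 2 : c ≤ ∫ dAlpha
    have hstep2 : c ≤ ∫ z, dAlpha α m z ∂P := by
      rcases eq_or_lt_of_le hc0 with h | h
      · rw [← h]; exact integral_nonneg fun z => Real.sqrt_nonneg _
      · exact le_of_mul_le_mul_left hstep1 h
    -- step 3 : √2 * min IM IN ≤ c
    have hSMbdd : BddBelow SM := ⟨0, fun x hx => by
      obtain ⟨p, rfl⟩ := hx; exact integral_nonneg fun z => dist_nonneg⟩
    have hSNbdd : BddBelow SN := ⟨0, fun x hx => by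
      obtain ⟨q, rfl⟩ := hx; exact integral_nonneg fun z => dist_nonneg⟩
    have hIMA : IM ≤ A := csInf_le hSMbdd ⟨m.1, rfl⟩
    have hINB : IN ≤ B := csInf_le hSNbdd ⟨m.2, rfl⟩
    have ht0 : 0 ≤ min A B := le_min hA0 hB0
    have hs3 : Real.sqrt 2 * min A B ≤ c := by
      have h2t : Real.sqrt (2 * min A B ^ 2) = Real.sqrt 2 * min A B := by
        rw [Real.sqrt_mul (by norm_num), Real.sqrt_sq ht0]
      rw [← h2t]
      apply Real.sqrt_le_sqrt
      have h1 : min A B ≤ A := min_le_left _ _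
      have h2 : min A B ≤ B := min_le_right _ _
      have e1 : min A B ^ 2 ≤ A ^ 2 := pow_le_pow_left₀ ht0 h1 2
      have e2 : min A B ^ 2 ≤ B ^ 2 := pow_le_pow_left₀ ht0 h2 2
      nlinarith [mul_le_mul_of_nonneg_left e1 hα0.le,
        mul_le_mul_of_nonneg_left e2 (by linarith : (0:ℝ) ≤ 2 - α)]
    calc Real.sqrt 2 * min IM IN ≤ Real.sqrt 2 * min A B :=
          mul_le_mul_of_nonneg_left (min_le_min hIMA hINB) (Real.sqrt_nonneg 2)
      _ ≤ c := hs3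
      _ ≤ _ := hstep2
  have hbdd : BddBelow S := ⟨Real.sqrt 2 * min IM IN, hlow⟩
  -- upper bound: sInf S ≤ √2 * IM and ≤ √2 * IN
  have hubM : sInf S ≤ Real.sqrt 2 * IM := by
    apply le_of_forall_pos_le_add
    intro ε hε
    have h2pos : (0:ℝ) < Real.sqrt 2 := Real.sqrt_pos.2 (by norm_num)
    -- choose p with √2 * A p ≤ √2 * IM + ε/2
    obtain ⟨v, ⟨p, rfl⟩, hv⟩ := exists_lt_of_csInf_lt hSMne
      (lt_add_of_pos_right IM (show (0:ℝ) < ε / 2 / Real.sqrt 2 by positivity))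
    set Ap := ∫ z, dist p z.1 ∂P with hAp
    have hAp0 : 0 ≤ Ap := integral_nonneg fun z => dist_nonneg
    set Bq := ∫ z, dist q₀ z.2 ∂P with hBq
    have hBq0 : 0 ≤ Bq := integral_nonneg fun z => dist_nonneg
    set δ : ℝ := min 1 ((ε / 2 / (Bq + 1)) ^ 2) with hδ
    have hδ0 : 0 < δ := lt_min one_pos (by positivity)
    have hδ1 : δ ≤ 1 := min_le_left _ _
    have hαmem : 2 - δ ∈ Set.Ioo (0:ℝ) 2 := ⟨by linarith, by linarith⟩
    have hmem : F (2 - δ) (p, q₀) ∈ S := ⟨(p, q₀), 2 - δ, hαmem, rfl⟩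
    have hbound : F (2 - δ) (p, q₀) ≤ Real.sqrt 2 * Ap + Real.sqrt δ * Bq := by
      rw [hF]
      have hmono : ∫ z, dAlpha (2 - δ) (p, q₀) z ∂P ≤
          ∫ z, (Real.sqrt (2 - δ) * dist p z.1 + Real.sqrt δ * dist q₀ z.2) ∂P := by
        refine integral_mono (hintD _ (by linarith) (by linarith) _)
          (((hintM p).const_mul _).add ((hintN q₀).const_mul _)) ?_
        intro z
        have := ub_aux (α := 2 - δ) (a := dist p z.1) (b := dist q₀ z.2)
          (by linarith) (by linarith) dist_nonneg dist_nonneg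
        simpa [dAlpha] using this
      have heq : ∫ z, (Real.sqrt (2 - δ) * dist p z.1 + Real.sqrt δ * dist q₀ z.2) ∂P =
          Real.sqrt (2 - δ) * Ap + Real.sqrt δ * Bq := by
        rw [integral_add ((hintM p).const_mul _) ((hintN q₀).const_mul _),
          integral_const_mul, integral_const_mul]
      refine le_trans (hmono.trans_eq heq) ?_
      have : Real.sqrt (2 - δ) ≤ Real.sqrt 2 := Real.sqrt_le_sqrt (by linarith)
      nlinarith
    have hterm2 : Real.sqrt δ * Bq ≤ ε / 2 := by
      have h1 : Real.sqrt δ ≤ ε / 2 / (Bq + 1) := by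
        have : Real.sqrt δ ≤ Real.sqrt ((ε / 2 / (Bq + 1)) ^ 2) :=
          Real.sqrt_le_sqrt (min_le_right _ _)
        rwa [Real.sqrt_sq (by positivity)] at this
      have h2 : Real.sqrt δ * Bq ≤ ε / 2 / (Bq + 1) * Bq :=
        mul_le_mul_of_nonneg_right h1 hBq0
      have h3 : ε / 2 / (Bq + 1) * Bq ≤ ε / 2 := by
        rw [div_mul_eq_mul_div, div_le_iff₀ (by linarith)]
        nlinarith
      linarith
    have hterm1 : Real.sqrt 2 * Ap ≤ Real.sqrt 2 * IM + ε / 2 := by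
      have h1 : Ap < IM + ε / 2 / Real.sqrt 2 := hv
      have h2 : Real.sqrt 2 * Ap ≤ Real.sqrt 2 * (IM + ε / 2 / Real.sqrt 2) :=
        mul_le_mul_of_nonneg_left h1.le (Real.sqrt_nonneg 2)
      have h3 : Real.sqrt 2 * (ε / 2 / Real.sqrt 2) = ε / 2 := by
        field_simp
      nlinarith
    calc sInf S ≤ F (2 - δ) (p, q₀) := csInf_le hbdd hmem
      _ ≤ Real.sqrt 2 * Ap + Real.sqrt δ * Bq := hbound
      _ ≤ Real.sqrt 2 * IM + ε := by linarith
  have hubN : sInf S ≤ Real.sqrt 2 * IN := by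
    apply le_of_forall_pos_le_add
    intro ε hε
    have h2pos : (0:ℝ) < Real.sqrt 2 := Real.sqrt_pos.2 (by norm_num)
    obtain ⟨v, ⟨q, rfl⟩, hv⟩ := exists_lt_of_csInf_lt hSNne
      (lt_add_of_pos_right IN (show (0:ℝ) < ε / 2 / Real.sqrt 2 by positivity))
    set Bq := ∫ z, dist q z.2 ∂P with hBq
    have hBq0 : 0 ≤ Bq := integral_nonneg fun z => dist_nonneg
    set Ap := ∫ z, dist p₀ z.1 ∂P with hAp
    have hAp0 : 0 ≤ Ap := integral_nonneg fun z => dist_nonneg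
    set δ : ℝ := min 1 ((ε / 2 / (Ap + 1)) ^ 2) with hδ
    have hδ0 : 0 < δ := lt_min one_pos (by positivity)
    have hδ1 : δ ≤ 1 := min_le_left _ _
    have hαmem : δ ∈ Set.Ioo (0:ℝ) 2 := ⟨hδ0, by linarith⟩
    have hmem : F δ (p₀, q) ∈ S := ⟨(p₀, q), δ, hαmem, rfl⟩
    have hbound : F δ (p₀, q) ≤ Real.sqrt δ * Ap + Real.sqrt 2 * Bq := by
      rw [hF]
      have hmono : ∫ z, dAlpha δ (p₀, q) z ∂P ≤
          ∫ z, (Real.sqrt δ * dist p₀ z.1 + Real.sqrt (2 - δ) * dist q z.2) ∂P := by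
        refine integral_mono (hintD _ hδ0.le (by linarith) _)
          (((hintM p₀).const_mul _).add ((hintN q).const_mul _)) ?_
        intro z
        have := ub_aux (α := δ) (a := dist p₀ z.1) (b := dist q z.2)
          hδ0.le (by linarith) dist_nonneg dist_nonneg
        simpa [dAlpha] using this
      have heq : ∫ z, (Real.sqrt δ * dist p₀ z.1 + Real.sqrt (2 - δ) * dist q z.2) ∂P =
          Real.sqrt δ * Ap + Real.sqrt (2 - δ) * Bq := by
        rw [integral_add ((hintM p₀).const_mul _) ((hintN q).const_mul _),
          integral_const_mul, integral_const_mul]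
      refine le_trans (hmono.trans_eq heq) ?_
      have : Real.sqrt (2 - δ) ≤ Real.sqrt 2 := Real.sqrt_le_sqrt (by linarith)
      nlinarith
    have hterm2 : Real.sqrt δ * Ap ≤ ε / 2 := by
      have h1 : Real.sqrt δ ≤ ε / 2 / (Ap + 1) := by
        have : Real.sqrt δ ≤ Real.sqrt ((ε / 2 / (Ap + 1)) ^ 2) :=
          Real.sqrt_le_sqrt (min_le_right _ _)
        rwa [Real.sqrt_sq (by positivity)] at this
      have h2 : Real.sqrt δ * Ap ≤ ε / 2 / (Ap + 1) * Ap :=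
        mul_le_mul_of_nonneg_right h1 hAp0
      have h3 : ε / 2 / (Ap + 1) * Ap ≤ ε / 2 := by
        rw [div_mul_eq_mul_div, div_le_iff₀ (by linarith)]
        nlinarith
      linarith
    have hterm1 : Real.sqrt 2 * Bq ≤ Real.sqrt 2 * IN + ε / 2 := by
      have h1 : Bq < IN + ε / 2 / Real.sqrt 2 := hv
      have h2 : Real.sqrt 2 * Bq ≤ Real.sqrt 2 * (IN + ε / 2 / Real.sqrt 2) :=
        mul_le_mul_of_nonneg_left h1.le (Real.sqrt_nonneg 2)
      have h3 : Real.sqrt 2 * (ε / 2 / Real.sqrt 2) = ε / 2 := by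
        field_simp
      nlinarith
    calc sInf S ≤ F δ (p₀, q) := csInf_le hbdd hmem
      _ ≤ Real.sqrt δ * Ap + Real.sqrt 2 * Bq := hbound
      _ ≤ Real.sqrt 2 * IN + ε := by linarith
  refine le_antisymm ?_ (le_csInf hSne hlow)
  rcases le_total IM IN with h | h
  · rw [min_eq_left h]; exact hubM
  · rw [min_eq_right h]; exact hubN
end

section
/- Let K ≥ 1, let M_1, …, M_K be metric spaces, let P be a Borel probability measure on the product Π_j M_j, and assume there is a point m⁰ ∈ Π_j M_j such that z ↦ d_j(m⁰_j, z_j) is integrable with respect to P for every j. For a weight vector w in the standard simplex and m ∈ Π_j M_j define F_w(m) = ∫ √(Σ_j w_j · d_j(m_j, z_j)²) dP(z). Then the infimum of F_w(m) over all m ∈ Π_j M_j and all w in the standard simplex equals the minimum over j of inf_{p ∈ M_j} ∫ d_j(p, z_j) dP(z). -/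
/-!
For `w` in the simplex, Jensen's inequality gives `∑ⱼ wⱼ dⱼ ≤ √(∑ⱼ wⱼ dⱼ²)` pointwise, so
`F_w(m) ≥ ∑ⱼ wⱼ ∫ dⱼ(mⱼ, zⱼ) dP ≥ minⱼ infₚ ∫ dⱼ(p, zⱼ) dP`. Conversely, at the vertex `w = eⱼ` the
integrand is `dⱼ(mⱼ, zⱼ)`, so every value of the `j`-th single-factor problem is a value of `F`.
-/

open MeasureTheory

lemma integrable_dist_of_integrable_dist {Ω X : Type*} [MeasurableSpace Ω] [PseudoMetricSpace X]
    [MeasurableSpace X] [OpensMeasurableSpace X] {μ : Measure Ω} [IsFiniteMeasure μ]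
    {f : Ω → X} (hf : Measurable f) {x : X} (hx : Integrable (fun ω => dist x (f ω)) μ) (y : X) :
    Integrable (fun ω => dist y (f ω)) μ := by
  refine (hx.add (integrable_const (dist y x))).mono'
    ((continuous_const.dist continuous_id).measurable.comp hf).aestronglyMeasurable
    (ae_of_all _ fun ω => ?_)
  rw [Real.norm_of_nonneg dist_nonneg, add_comm]
  exact dist_triangle y x (f ω)

section WeightedSums

variable {ι : Type*} {s : Finset ι} {w a : ι → ℝ}

lemma sum_mul_le_sqrt_sum_mul_sq (hw₀ : ∀ i ∈ s, 0 ≤ w i) (hw₁ : ∑ i ∈ s, w i = 1) :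
    ∑ i ∈ s, w i * a i ≤ √(∑ i ∈ s, w i * a i ^ 2) := by
  have hjensen := (Even.convexOn_pow (𝕜 := ℝ) even_two).map_sum_le hw₀ hw₁ (fun i _ => Set.mem_univ (a i))
  exact (le_abs_self _).trans (Real.abs_le_sqrt (by simpa only [smul_eq_mul] using hjensen))

lemma sqrt_sum_mul_sq_le_sum_abs (hw : ∀ i ∈ s, w i ≤ 1) :
    √(∑ i ∈ s, w i * a i ^ 2) ≤ ∑ i ∈ s, |a i| := by
  refine Real.sqrt_le_iff.mpr ⟨Finset.sum_nonneg fun i _ => abs_nonneg _, ?_⟩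
  calc ∑ i ∈ s, w i * a i ^ 2 ≤ ∑ i ∈ s, |a i| ^ 2 :=
        Finset.sum_le_sum fun i hi => by
          rw [sq_abs]; exact mul_le_of_le_one_left (sq_nonneg _) (hw i hi)
    _ ≤ (∑ i ∈ s, |a i|) ^ 2 := Finset.sum_sq_le_sq_sum_of_nonneg fun i _ => abs_nonneg _

end WeightedSums

section WeightedIntegrals

variable {ι Ω : Type*} [Fintype ι] [MeasurableSpace Ω] {μ : Measure Ω}
  {w : ι → ℝ} {g : ι → Ω → ℝ}

lemma integrable_sqrt_sum_mul_sq (hw : w ∈ stdSimplex ℝ ι) (hg : ∀ i, Integrable (g i) μ) :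
    Integrable (fun ω => √(∑ i, w i * g i ω ^ 2)) μ := by
  have hmeas : AEMeasurable (fun ω => √(∑ i, w i * g i ω ^ 2)) μ := by
    have := fun i => (hg i).aemeasurable
    fun_prop
  refine (integrable_finsetSum Finset.univ fun i _ => (hg i).abs).mono'
    hmeas.aestronglyMeasurable (ae_of_all _ fun ω => ?_)
  rw [Real.norm_of_nonneg (Real.sqrt_nonneg _)]
  exact sqrt_sum_mul_sq_le_sum_abs fun i _ => (mem_Icc_of_mem_stdSimplex hw i).2

lemma sum_mul_integral_le_integral_sqrt (hw : w ∈ stdSimplex ℝ ι) (hg : ∀ i, Integrable (g i) μ) :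
    ∑ i, w i * ∫ ω, g i ω ∂μ ≤ ∫ ω, √(∑ i, w i * g i ω ^ 2) ∂μ := by
  simp_rw [← integral_const_mul]
  rw [← integral_finsetSum _ fun i _ => (hg i).const_mul (w i)]
  exact integral_mono (integrable_finsetSum _ fun i _ => (hg i).const_mul (w i))
    (integrable_sqrt_sum_mul_sq hw hg)
    fun ω => sum_mul_le_sqrt_sum_mul_sq (fun i _ => hw.1 i) hw.2

end WeightedIntegrals

theorem stmt_8 (K : ℕ) (hK : 1 ≤ K) (M : Fin K → Type*)
    [∀ j, MetricSpace (M j)] [∀ j, MeasurableSpace (M j)] [∀ j, BorelSpace (M j)]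
    (P : Measure (Π j, M j)) [IsProbabilityMeasure P]
    (m0 : Π j, M j)
    (hint : ∀ j, Integrable (fun z : Π j, M j => dist (m0 j) (z j)) P)
    (F : (Fin K → ℝ) → (Π j, M j) → ℝ)
    (hF : ∀ w m, F w m = ∫ z, Real.sqrt (∑ j, w j * dist (m j) (z j) ^ 2) ∂P) :
    sInf {v : ℝ | ∃ m : Π j, M j, ∃ w ∈ stdSimplex ℝ (Fin K), v = F w m} =
      Finset.univ.inf'
        (Finset.univ_nonempty_iff.mpr (Fin.pos_iff_nonempty.mp hK))
        (fun j => sInf {v : ℝ | ∃ p : M j, v = ∫ z, dist p (z j) ∂P}) := by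
  obtain rfl : F = fun w m => ∫ z, √(∑ j, w j * dist (m j) (z j) ^ 2) ∂P :=
    funext₂ hF
  have hdist (j : Fin K) (p : M j) : Integrable (fun z : Π j, M j => dist p (z j)) P :=
    integrable_dist_of_integrable_dist (measurable_pi_apply j) (hint j) p
  refine le_antisymm (Finset.le_inf' _ _ fun j _ => ?_) ?_
  · refine csInf_le_csInf ⟨0, ?_⟩ ⟨_, m0 j, rfl⟩ ?_
    · rintro _ ⟨m, w, -, rfl⟩
      exact integral_nonneg fun z => Real.sqrt_nonneg _
    · rintro _ ⟨p, rfl⟩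
      refine ⟨Function.update m0 j p, Pi.single j 1, single_mem_stdSimplex ℝ j, ?_⟩
      simp [Pi.single_apply, Real.sqrt_sq dist_nonneg]
  · refine le_csInf ⟨_, m0, _, single_mem_stdSimplex ℝ ⟨0, hK⟩, rfl⟩ ?_
    rintro _ ⟨m, w, hw, rfl⟩
    calc _ ≤ ∑ j, w j * sInf {v : ℝ | ∃ p : M j, v = ∫ z, dist p (z j) ∂P} :=
          (Finset.inf_le_centerMass (fun j _ => hw.1 j) (hw.2 ▸ one_pos)).trans_eq
            (Finset.centerMass_eq_of_sum_1 _ _ hw.2)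
      _ ≤ ∑ j, w j * ∫ z, dist (m j) (z j) ∂P := by
          gcongr with j
          · exact hw.1 j
          · exact csInf_le ⟨0, by rintro _ ⟨p, rfl⟩; exact integral_nonneg fun z => dist_nonneg⟩
              ⟨m j, rfl⟩
      _ ≤ _ := sum_mul_integral_le_integral_sqrt hw fun j => hdist j (m j)
end

section
/- Let M and N be metric spaces, let P be a Borel probability measure on M × N such that z ↦ d_M(p₀, z.1) and z ↦ d_N(q₀, z.2) are integrable for some (p₀, q₀), and let K be a compact subset of M × N. Fix ε ∈ (0, 1) and define F(α, m) = ∫ d_α(m, z) dP(z) for α ∈ [ε, 2−ε] and m ∈ M × N. Suppose m⋆ : [ε, 2−ε] → M × N is a map such that for every α ∈ [ε, 2−ε], m⋆(α) ∈ K, F(α, m⋆(α)) ≤ F(α, u) for all u ∈ K, and m⋆(α) is the only point of K with this minimizing property. Then m⋆ is continuous on [ε, 2−ε]. -/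
/-! If `F` is jointly continuous in `(α, m)` and `K` is compact, every cluster point of `m⋆`
at `α₀` minimises `F α₀` on `K` (pass to the limit in `F α (m⋆ α) ≤ F α u`), hence is `m⋆ α₀`
by uniqueness; compactness turns "unique cluster point" into convergence. Joint continuity of `F`
follows from dominated convergence, since `d_α(m, z)` is locally bounded by an affine function
of `d_M(p₀, z.1) + d_N(q₀, z.2)`. -/

open MeasureTheory

open Filter Topology Function

section ArgminContinuity

variable {X Y β : Type*} [TopologicalSpace X] [TopologicalSpace Y]
  [Preorder β] [TopologicalSpace β] [OrderClosedTopology β]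

theorem isMinOn_of_mapClusterPt {G : X → Y → β} (hG : Continuous (uncurry G))
    {K : Set Y} {l : Filter X} {x₀ : X} (hl : l ≤ 𝓝 x₀) {m : X → Y}
    (hmin : ∀ᶠ x in l, IsMinOn (G x) K (m x)) {y : Y} (hy : MapClusterPt y l m) :
    IsMinOn (G x₀) K y := by
  obtain ⟨U, hUl, hUy⟩ := mapClusterPt_iff_ultrafilter.1 hy
  have hUx₀ : Tendsto id (U : Filter X) (𝓝 x₀) := tendsto_id'.2 (hUl.trans hl)
  intro u hu
  refine le_of_tendsto_of_tendsto ((hG.tendsto (x₀, y)).comp (hUx₀.prodMk_nhds hUy))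
    ((hG.tendsto (x₀, u)).comp (hUx₀.prodMk_nhds tendsto_const_nhds)) ?_
  filter_upwards [hUl hmin] with x hx using hx hu

theorem continuousOn_of_isMinOn_of_unique {G : X → Y → β} (hG : Continuous (uncurry G))
    {S : Set X} {K : Set Y} (hK : IsCompact K) {m : X → Y} (hmK : ∀ x ∈ S, m x ∈ K)
    (hmin : ∀ x ∈ S, IsMinOn (G x) K (m x))
    (huniq : ∀ x ∈ S, ∀ y ∈ K, IsMinOn (G x) K y → y = m x) :
    ContinuousOn m S := fun x₀ hx₀ =>
  hK.tendsto_nhds_of_unique_mapClusterPt (eventually_nhdsWithin_of_forall hmK)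
    fun y hy hcl => huniq x₀ hx₀ y hy <|
      isMinOn_of_mapClusterPt hG nhdsWithin_le_nhds (eventually_nhdsWithin_of_forall hmin) hcl

end ArgminContinuity

namespace dAlpha

variable {M N : Type*} [MetricSpace M] [MetricSpace N]

theorem nonneg (α : ℝ) (m z : M × N) : 0 ≤ dAlpha α m z := Real.sqrt_nonneg _

theorem le_sqrt_mul_add {α C : ℝ} (hα : α ≤ C) (h2α : 2 - α ≤ C) (m z : M × N) :
    dAlpha α m z ≤ √C * (dist m.1 z.1 + dist m.2 z.2) := by
  have ha : 0 ≤ dist m.1 z.1 := dist_nonneg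
  have hb : 0 ≤ dist m.2 z.2 := dist_nonneg
  calc dAlpha α m z ≤ √(C * (dist m.1 z.1 + dist m.2 z.2) ^ 2) := by
        unfold dAlpha
        gcongr
        nlinarith [mul_nonneg ha hb, mul_nonneg (mul_nonneg ha hb) (by linarith : 0 ≤ C)]
    _ = √C * (dist m.1 z.1 + dist m.2 z.2) := by
        rw [Real.sqrt_mul (by linarith), Real.sqrt_sq (by positivity)]

theorem continuous_param (z : M × N) : Continuous fun p : ℝ × (M × N) => dAlpha p.1 p.2 z := by
  unfold dAlpha
  fun_prop

variable [MeasurableSpace M] [MeasurableSpace N] [OpensMeasurableSpace M]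
  [OpensMeasurableSpace N]

theorem measurable (α : ℝ) (m : M × N) : Measurable (dAlpha α m) := by
  have h₁ : Measurable fun z : M × N => dist m.1 z.1 :=
    (continuous_const.dist continuous_id).measurable.comp measurable_fst
  have h₂ : Measurable fun z : M × N => dist m.2 z.2 :=
    (continuous_const.dist continuous_id).measurable.comp measurable_snd
  exact (((h₁.pow_const 2).const_mul _).add ((h₂.pow_const 2).const_mul _)).sqrt

theorem continuous_integral (P : Measure (M × N)) [IsFiniteMeasure P] (p₀ : M) (q₀ : N)
    (hM : Integrable (fun z : M × N => dist p₀ z.1) P)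
    (hN : Integrable (fun z : M × N => dist q₀ z.2) P) :
    Continuous (uncurry fun α m => ∫ z, dAlpha α m z ∂P) := by
  refine continuous_iff_continuousAt.2 fun ⟨α₀, m₀⟩ => ?_
  -- on the unit ball around `(α₀, m₀)` both weights are at most `|α₀| + 3`
  refine continuousAt_of_dominated
    (bound := fun z => √(|α₀| + 3) *
      ((2 + dist m₀.1 p₀ + dist m₀.2 q₀) + (dist p₀ z.1 + dist q₀ z.2)))
    (Eventually.of_forall fun p => (measurable p.1 p.2).aestronglyMeasurable) ?_
    ((((integrable_const _).add (hM.add hN))).const_mul _)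
    (Eventually.of_forall fun z => (continuous_param z).continuousAt)
  filter_upwards [Metric.ball_mem_nhds (α₀, m₀) one_pos] with ⟨α, m⟩ hp
  refine Eventually.of_forall fun z => ?_
  simp only [Metric.mem_ball, Prod.dist_eq, max_lt_iff, Real.dist_eq, abs_lt] at hp
  obtain ⟨⟨hα₁, hα₂⟩, hm₁, hm₂⟩ := hp
  rw [Real.norm_of_nonneg (nonneg α m z)]
  refine (le_sqrt_mul_add (C := |α₀| + 3) (by linarith [le_abs_self α₀])
    (by linarith [neg_abs_le α₀]) m z).trans (mul_le_mul_of_nonneg_left ?_ (Real.sqrt_nonneg _))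
  linarith [dist_triangle4 m.1 m₀.1 p₀ z.1, dist_triangle4 m.2 m₀.2 q₀ z.2]

end dAlpha

theorem stmt_9_general {M N : Type*} [MetricSpace M] [MetricSpace N]
    [MeasurableSpace M] [MeasurableSpace N] [BorelSpace M] [BorelSpace N]
    (P : Measure (M × N)) [IsProbabilityMeasure P]
    (p₀ : M) (q₀ : N)
    (hM : Integrable (fun z : M × N => dist p₀ z.1) P)
    (hN : Integrable (fun z : M × N => dist q₀ z.2) P)
    (K : Set (M × N)) (hK : IsCompact K)
    (ε : ℝ)
    (F : ℝ → M × N → ℝ)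
    (hF : ∀ α m, F α m = ∫ z, dAlpha α m z ∂P)
    (mStar : ℝ → M × N)
    (hmem : ∀ α ∈ Set.Icc ε (2 - ε), mStar α ∈ K)
    (hmin : ∀ α ∈ Set.Icc ε (2 - ε), ∀ u ∈ K, F α (mStar α) ≤ F α u)
    (huniq : ∀ α ∈ Set.Icc ε (2 - ε), ∀ m ∈ K,
      (∀ u ∈ K, F α m ≤ F α u) → m = mStar α) :
    ContinuousOn mStar (Set.Icc ε (2 - ε)) := by
  obtain rfl : F = fun α m => ∫ z, dAlpha α m z ∂P := funext₂ hF
  exact continuousOn_of_isMinOn_of_unique (dAlpha.continuous_integral P p₀ q₀ hM hN) hK hmem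
    (fun α hα => isMinOn_iff.2 (hmin α hα))
    (fun α hα m hm hmin' => huniq α hα m hm (isMinOn_iff.1 hmin'))

theorem stmt_9 {M N : Type*} [MetricSpace M] [MetricSpace N]
    [MeasurableSpace M] [MeasurableSpace N] [BorelSpace M] [BorelSpace N]
    (P : Measure (M × N)) [IsProbabilityMeasure P]
    (p₀ : M) (q₀ : N)
    (hM : Integrable (fun z : M × N => dist p₀ z.1) P)
    (hN : Integrable (fun z : M × N => dist q₀ z.2) P)
    (K : Set (M × N)) (hK : IsCompact K)
    (ε : ℝ) (hε : ε ∈ Set.Ioo (0 : ℝ) 1)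
    (F : ℝ → M × N → ℝ)
    (hF : ∀ α m, F α m = ∫ z, dAlpha α m z ∂P)
    (mStar : ℝ → M × N)
    (hmem : ∀ α ∈ Set.Icc ε (2 - ε), mStar α ∈ K)
    (hmin : ∀ α ∈ Set.Icc ε (2 - ε), ∀ u ∈ K, F α (mStar α) ≤ F α u)
    (huniq : ∀ α ∈ Set.Icc ε (2 - ε), ∀ m ∈ K,
      (∀ u ∈ K, F α m ≤ F α u) → m = mStar α) :
    ContinuousOn mStar (Set.Icc ε (2 - ε)) :=
  stmt_9_general P p₀ q₀ hM hN K hK ε F hF mStar hmem hmin huniq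
end

section
/- Let (Ω, P) be a probability space and let A, B : Ω → ℝ be measurable functions with A > 0 almost everywhere and B > 0 almost everywhere. Define H(α) = ∫ (α·A(ω) − (2−α)·B(ω)) / (α·A(ω) + (2−α)·B(ω)) dP(ω) for α ∈ (0, 2). Then H is continuous on (0, 2) and strictly increasing on (0, 2). -/
open MeasureTheory

theorem stmt_13 {Ω : Type*} [MeasurableSpace Ω]
    (P : Measure Ω) [IsProbabilityMeasure P]
    (A B : Ω → ℝ) (hA : Measurable A) (hB : Measurable B)
    (hApos : ∀ᵐ ω ∂P, 0 < A ω) (hBpos : ∀ᵐ ω ∂P, 0 < B ω)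
    (H : ℝ → ℝ)
    (hH : ∀ α, H α =
      ∫ ω, (α * A ω - (2 - α) * B ω) / (α * A ω + (2 - α) * B ω) ∂P) :
    ContinuousOn H (Set.Ioo (0 : ℝ) 2) ∧ StrictMonoOn H (Set.Ioo (0 : ℝ) 2) := by
  set F : ℝ → Ω → ℝ := fun α ω => (α * A ω - (2 - α) * B ω) / (α * A ω + (2 - α) * B ω)
    with hF
  have hPos := hApos.and hBpos
  -- measurability
  have hmeas : ∀ α : ℝ, AEStronglyMeasurable (F α) P := by
    intro α
    exact (((hA.const_mul α).sub (hB.const_mul (2 - α))).div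
      ((hA.const_mul α).add (hB.const_mul (2 - α)))).aestronglyMeasurable
  -- denominator positivity
  have hden : ∀ α ∈ Set.Ioo (0:ℝ) 2, ∀ᵐ ω ∂P, 0 < α * A ω + (2 - α) * B ω := by
    intro α hα
    filter_upwards [hPos] with ω ⟨ha, hb⟩
    have h1 : 0 < α * A ω := mul_pos hα.1 ha
    have h2 : 0 < (2 - α) * B ω := mul_pos (by linarith [hα.2]) hb
    linarith
  -- bound
  have hbound : ∀ α ∈ Set.Ioo (0:ℝ) 2, ∀ᵐ ω ∂P, ‖F α ω‖ ≤ 1 := by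
    intro α hα
    filter_upwards [hden α hα, hPos] with ω hd ⟨hpa, hpb⟩
    rw [Real.norm_eq_abs, abs_div, abs_of_pos hd, div_le_one hd]
    have h1 : 0 < α * A ω := mul_pos hα.1 hpa
    have h2 : 0 < (2 - α) * B ω := mul_pos (by linarith [hα.2]) hpb
    rcases abs_cases (α * A ω - (2 - α) * B ω) with ⟨h, _⟩ | ⟨h, _⟩ <;> linarith
  have hint : ∀ α ∈ Set.Ioo (0:ℝ) 2, Integrable (F α) P := by
    intro α hα
    exact (integrable_const (1:ℝ)).mono' (hmeas α) (hbound α hα)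
  constructor
  · have : ContinuousOn (fun α => ∫ ω, F α ω ∂P) (Set.Ioo (0:ℝ) 2) := by
      apply continuousOn_of_dominated (bound := fun _ => (1:ℝ))
        (fun α hα => hmeas α) hbound (integrable_const 1)
      filter_upwards [hPos] with ω ⟨ha, hb⟩
      apply ContinuousOn.div
      · fun_prop
      · fun_prop
      · intro α hα
        have h1 : 0 < α * A ω := mul_pos hα.1 ha
        have h2 : 0 < (2 - α) * B ω := mul_pos (by linarith [hα.2]) hb
        positivity
    exact this.congr (fun α _ => hH α)
  · intro a ha b hb hab
    rw [hH a, hH b]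
    have hlt : ∀ᵐ ω ∂P, F a ω < F b ω := by
      filter_upwards [hden a ha, hden b hb, hPos] with ω h1 h2 ⟨hpa, hpb⟩
      rw [hF]
      rw [div_lt_div_iff₀ h1 h2]
      nlinarith [mul_pos hpa hpb, hab]
    have hsub : Integrable (fun ω => F b ω - F a ω) P := (hint b hb).sub (hint a ha)
    have hkey : 0 < ∫ ω, (F b ω - F a ω) ∂P := by
      rw [integral_pos_iff_support_of_nonneg_ae
        (hlt.mono fun ω h => by simp [sub_nonneg, h.le]) hsub]
      have hss : ∀ᵐ ω ∂P, ω ∈ Function.support (fun ω => F b ω - F a ω) := by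
        filter_upwards [hlt] with ω h
        simp [Function.support, sub_ne_zero, h.ne']
      have h0 : P (Function.support (fun ω => F b ω - F a ω))ᶜ = 0 := by
        rw [ae_iff] at hss
        simpa [Set.compl_def] using hss
      have := prob_compl_eq_zero_iff (μ := P)
        (s := Function.support (fun ω => F b ω - F a ω))
      by_contra hle
      push_neg at hle
      have : P (Function.support fun ω => F b ω - F a ω) = 0 := le_antisymm hle zero_le
      have huniv : P Set.univ ≤ 0 := by
        calc P Set.univ ≤ P (Function.support (fun ω => F b ω - F a ω))
            + P (Function.support (fun ω => F b ω - F a ω))ᶜ :=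
              (measure_mono (by simp)).trans (measure_union_le _ _)
          _ = 0 := by rw [this, h0, add_zero]
      simp [measure_univ] at huniv
    have := integral_sub (hint b hb) (hint a ha)
    linarith [hkey, this ▸ hkey]
end

section
/- Let (Ω, P) be a probability space and let A, B : Ω → ℝ be measurable functions with A > 0 almost everywhere and B > 0 almost everywhere. Define H(α) = ∫ (α·A(ω) − (2−α)·B(ω)) / (α·A(ω) + (2−α)·B(ω)) dP(ω) for α ∈ (0, 2). Then there exists a unique α ∈ (0, 2) such that H(α) = 0. -/
open MeasureTheory Set Filter Topology

private lemma stmt15_denom_pos {a b α : ℝ} (ha : 0 < a) (hb : 0 < b)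
    (h0 : 0 ≤ α) (h2 : α ≤ 2) : 0 < α * a + (2 - α) * b := by
  rcases eq_or_lt_of_le h0 with h | h
  · nlinarith
  · nlinarith

private lemma stmt15_abs_le {a b α : ℝ} (ha : 0 < a) (hb : 0 < b)
    (h0 : 0 ≤ α) (h2 : α ≤ 2) :
    |(α * a - (2 - α) * b) / (α * a + (2 - α) * b)| ≤ 1 := by
  have hd := stmt15_denom_pos ha hb h0 h2
  rw [abs_div, abs_of_pos hd, div_le_one hd, abs_le]
  constructor <;> nlinarith

private lemma stmt15_mono {a b α β : ℝ} (ha : 0 < a) (hb : 0 < b)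
    (h0 : 0 ≤ α) (h2 : β ≤ 2) (hαβ : α < β) :
    (α * a - (2 - α) * b) / (α * a + (2 - α) * b)
      < (β * a - (2 - β) * b) / (β * a + (2 - β) * b) := by
  have hdα := stmt15_denom_pos ha hb h0 (le_of_lt (lt_of_lt_of_le hαβ h2))
  have hdβ := stmt15_denom_pos ha hb (le_of_lt (lt_of_le_of_lt h0 hαβ)) h2
  rw [div_lt_div_iff₀ hdα hdβ]
  nlinarith [mul_pos (mul_pos ha hb) (sub_pos.mpr hαβ)]

theorem stmt_15 {Ω : Type*} [MeasurableSpace Ω]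
    (P : Measure Ω) [IsProbabilityMeasure P]
    (A B : Ω → ℝ) (hA : Measurable A) (hB : Measurable B)
    (hApos : ∀ᵐ ω ∂P, 0 < A ω) (hBpos : ∀ᵐ ω ∂P, 0 < B ω)
    (H : ℝ → ℝ)
    (hH : ∀ α, H α =
      ∫ ω, (α * A ω - (2 - α) * B ω) / (α * A ω + (2 - α) * B ω) ∂P) :
    ∃! α : ℝ, α ∈ Set.Ioo (0 : ℝ) 2 ∧ H α = 0 := by
  set f : ℝ → Ω → ℝ := fun α ω =>
    (α * A ω - (2 - α) * B ω) / (α * A ω + (2 - α) * B ω) with hf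
  have hHfun : H = fun α => ∫ ω, f α ω ∂P := funext hH
  have hAB : ∀ᵐ ω ∂P, 0 < A ω ∧ 0 < B ω := hApos.and hBpos
  have hmeas : ∀ α : ℝ, AEStronglyMeasurable (f α) P := fun α =>
    (((measurable_const.mul hA).sub (measurable_const.mul hB)).div
      ((measurable_const.mul hA).add (measurable_const.mul hB))).aestronglyMeasurable
  have habd : ∀ α ∈ Icc (0:ℝ) 2, ∀ᵐ ω ∂P, ‖f α ω‖ ≤ 1 := by
    intro α hα
    filter_upwards [hAB] with ω hω
    simp only [hf, Real.norm_eq_abs]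
    exact stmt15_abs_le hω.1 hω.2 hα.1 hα.2
  have hint : ∀ α ∈ Icc (0:ℝ) 2, Integrable (f α) P := fun α hα =>
    Integrable.mono' (integrable_const 1) (hmeas α) (habd α hα)
  -- strict monotonicity of H on Ioo 0 2
  have hMono : StrictMonoOn H (Ioo (0:ℝ) 2) := by
    intro α hα β hβ hαβ
    rw [hH α, hH β]
    have hnonneg : 0 ≤ᵐ[P] fun ω => f β ω - f α ω := by
      filter_upwards [hAB] with ω hω
      exact sub_nonneg.mpr (le_of_lt (stmt15_mono hω.1 hω.2 hα.1.le hβ.2.le hαβ))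
    have hintsub : Integrable (fun ω => f β ω - f α ω) P :=
      (hint β (Ioo_subset_Icc_self hβ)).sub (hint α (Ioo_subset_Icc_self hα))
    have hsupp : ∀ᵐ ω ∂P, ω ∈ Function.support fun ω => f β ω - f α ω := by
      filter_upwards [hAB] with ω hω
      simp only [Function.mem_support]
      exact sub_ne_zero.mpr (stmt15_mono hω.1 hω.2 hα.1.le hβ.2.le hαβ).ne'
    have hpos : 0 < ∫ ω, (f β ω - f α ω) ∂P := by
      rw [integral_pos_iff_support_of_nonneg_ae hnonneg hintsub]
      set S := Function.support fun ω => f β ω - f α ω with hS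
      have hc : P Sᶜ = 0 := by
        have := ae_iff.mp hsupp
        simpa [Set.compl_def] using this
      have h1 : (1:ENNReal) ≤ P S := by
        have h2 := measure_union_le (μ := P) S Sᶜ
        rw [union_compl_self, measure_univ, hc, add_zero] at h2
        exact h2
      exact lt_of_lt_of_le one_pos h1
    rw [integral_sub (hint β (Ioo_subset_Icc_self hβ)) (hint α (Ioo_subset_Icc_self hα))] at hpos
    show (∫ ω, f α ω ∂P) < ∫ ω, f β ω ∂P
    linarith
  -- continuity of H on Ioo 0 2
  have hCont : ContinuousOn H (Ioo (0:ℝ) 2) := by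
    intro α₀ hα₀
    apply ContinuousAt.continuousWithinAt
    rw [hHfun]
    refine continuousAt_of_dominated (Eventually.of_forall hmeas) ?_ (integrable_const 1) ?_
    · filter_upwards [Ioo_mem_nhds hα₀.1 hα₀.2] with α hα
      exact habd α (Ioo_subset_Icc_self hα)
    · filter_upwards [hAB] with ω hω
      have hd : α₀ * A ω + (2 - α₀) * B ω ≠ 0 :=
        ne_of_gt (stmt15_denom_pos hω.1 hω.2 hα₀.1.le hα₀.2.le)
      exact ContinuousAt.div (by fun_prop) (by fun_prop) hd
  -- limit at 0⁺
  have hlim0 : Tendsto H (𝓝[>] (0:ℝ)) (𝓝 (-1)) := by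
    rw [hHfun]
    have h1 : Tendsto (fun α => ∫ ω, f α ω ∂P) (𝓝[>] (0:ℝ)) (𝓝 (∫ ω, f 0 ω ∂P)) := by
      apply tendsto_integral_filter_of_dominated_convergence (fun _ => (1:ℝ))
      · exact Eventually.of_forall hmeas
      · filter_upwards [Ioo_mem_nhdsGT_of_mem (by norm_num : (0:ℝ) ∈ Ico (0:ℝ) 2)] with α hα
        exact habd α (Ioo_subset_Icc_self hα)
      · exact integrable_const 1
      · filter_upwards [hAB] with ω hω
        have hd : (0:ℝ) * A ω + (2 - 0) * B ω ≠ 0 :=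
          ne_of_gt (stmt15_denom_pos hω.1 hω.2 le_rfl (by norm_num))
        have hc : ContinuousAt
            (fun α : ℝ => (α * A ω - (2 - α) * B ω) / (α * A ω + (2 - α) * B ω)) 0 :=
          ContinuousAt.div (by fun_prop) (by fun_prop) hd
        exact hc.tendsto.mono_left nhdsWithin_le_nhds
    have h2 : ∫ ω, f 0 ω ∂P = -1 := by
      have : ∀ᵐ ω ∂P, f 0 ω = -1 := by
        filter_upwards [hAB] with ω hω
        have hb := hω.2
        simp only [hf]; rw [div_eq_iff (ne_of_gt (by nlinarith))]; ring
      rw [integral_congr_ae this]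
      simp
    rwa [h2] at h1
  -- limit at 2⁻
  have hlim2 : Tendsto H (𝓝[<] (2:ℝ)) (𝓝 1) := by
    rw [hHfun]
    have h1 : Tendsto (fun α => ∫ ω, f α ω ∂P) (𝓝[<] (2:ℝ)) (𝓝 (∫ ω, f 2 ω ∂P)) := by
      apply tendsto_integral_filter_of_dominated_convergence (fun _ => (1:ℝ))
      · exact Eventually.of_forall hmeas
      · filter_upwards [Ioo_mem_nhdsLT_of_mem (by norm_num : (2:ℝ) ∈ Ioc (0:ℝ) 2)] with α hα
        exact habd α (Ioo_subset_Icc_self hα)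
      · exact integrable_const 1
      · filter_upwards [hAB] with ω hω
        have hd : (2:ℝ) * A ω + (2 - 2) * B ω ≠ 0 :=
          ne_of_gt (stmt15_denom_pos hω.1 hω.2 (by norm_num) le_rfl)
        have hc : ContinuousAt
            (fun α : ℝ => (α * A ω - (2 - α) * B ω) / (α * A ω + (2 - α) * B ω)) 2 :=
          ContinuousAt.div (by fun_prop) (by fun_prop) hd
        exact hc.tendsto.mono_left nhdsWithin_le_nhds
    have h2 : ∫ ω, f 2 ω ∂P = 1 := by
      have : ∀ᵐ ω ∂P, f 2 ω = 1 := by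
        filter_upwards [hAB] with ω hω
        have ha := hω.1
        simp only [hf]; rw [div_eq_iff (ne_of_gt (by nlinarith))]; ring
      rw [integral_congr_ae this]
      simp
    rwa [h2] at h1
  -- find points with negative and positive values
  have hneg : ∃ α₁ ∈ Ioo (0:ℝ) 2, H α₁ < 0 := by
    have he1 : ∀ᶠ α in 𝓝[>] (0:ℝ), H α < 0 :=
      hlim0.eventually_lt_const (by norm_num : (-1:ℝ) < 0)
    have he2 : ∀ᶠ α in 𝓝[>] (0:ℝ), α ∈ Ioo (0:ℝ) 2 :=
      Ioo_mem_nhdsGT_of_mem (by norm_num : (0:ℝ) ∈ Ico (0:ℝ) 2)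
    obtain ⟨α₁, h1, h2⟩ := (he2.and he1).exists
    exact ⟨α₁, h1, h2⟩
  have hposv : ∃ α₂ ∈ Ioo (0:ℝ) 2, 0 < H α₂ := by
    have he1 : ∀ᶠ α in 𝓝[<] (2:ℝ), 0 < H α :=
      hlim2.eventually_const_lt (by norm_num : (0:ℝ) < 1)
    have he2 : ∀ᶠ α in 𝓝[<] (2:ℝ), α ∈ Ioo (0:ℝ) 2 :=
      Ioo_mem_nhdsLT_of_mem (by norm_num : (2:ℝ) ∈ Ioc (0:ℝ) 2)
    obtain ⟨α₂, h1, h2⟩ := (he2.and he1).exists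
    exact ⟨α₂, h1, h2⟩
  obtain ⟨α₁, hα₁, hH1⟩ := hneg
  obtain ⟨α₂, hα₂, hH2⟩ := hposv
  have h12 : α₁ < α₂ := by
    by_contra h
    push_neg at h
    rcases eq_or_lt_of_le h with h | h
    · rw [h] at hH2; linarith
    · have := hMono hα₂ hα₁ h
      linarith
  have hsub : Icc α₁ α₂ ⊆ Ioo (0:ℝ) 2 := Icc_subset_Ioo hα₁.1 hα₂.2
  obtain ⟨α, hαmem, hα0⟩ :=
    intermediate_value_Icc h12.le (hCont.mono hsub) ⟨hH1.le, hH2.le⟩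
  refine ⟨α, ⟨hsub hαmem, hα0⟩, ?_⟩
  rintro β ⟨hβ, hβ0⟩
  exact hMono.injOn hβ (hsub hαmem) (by rw [hβ0, hα0])
end
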